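/- arXiv:2601.06534 — 3 statements merged into one kernel-verified Lean document; each statement's English description precedes it below -/
import Mathlib

section
/- If (T(t,τ))_{t≥τ} is an evolutionary family and x : ℝ → X satisfies both x(t) = T(t,τ)x(τ) + ∫_τ^t T(t,s)y₁(s) ds and x(t) = T(t,τ)x(τ) + ∫_τ^t T(t,s)y₂(s) ds for all t ≥ τ, where y₁, y₂ are locally integrable, then y₁(t) = y₂(t) for almost every t ∈ ℝ. -/
/-!
Subtracting the two equations, `y = y₁ - y₂` satisfies `∫_{(τ, t]} T(t,s) y(s) ds = 0` for all
`τ ≤ t`. At a (left) Lebesgue point `t` of `y`, the averages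
`r⁻¹ ∫_{(t-r, t]} T(t,s) y(s) ds` tend to `T(t,t) y(t) = y(t)` as `r → 0⁺`: the operators
`T(t,s)`, `s ∈ [t-1, t]`, are uniformly bounded by Banach–Steinhaus, and `s ↦ T(t,s) y(t)` is
continuous. Hence `y(t) = 0` for almost every `t`.
-/

open MeasureTheory Set Filter Topology

section Family

variable {𝕜 α E F : Type*} [NontriviallyNormedField 𝕜] [NormedAddCommGroup E] [NormedSpace 𝕜 E]
  [NormedAddCommGroup F] [NormedSpace 𝕜 F]

theorem IsCompact.exists_forall_opNorm_le [TopologicalSpace α] [CompleteSpace E] {K : Set α}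
    (hK : IsCompact K) {L : α → E →L[𝕜] F} (hL : ∀ v, ContinuousOn (fun a => L a v) K) :
    ∃ M, ∀ a ∈ K, ‖L a‖ ≤ M := by
  obtain ⟨M, hM⟩ := banach_steinhaus (g := fun a : K => L a) fun v =>
    let ⟨C, hC⟩ := hK.exists_bound_of_continuousOn (hL v)
    ⟨C, fun a => hC a a.2⟩
  exact ⟨M, fun a ha => hM ⟨a, ha⟩⟩

theorem MeasureTheory.AEStronglyMeasurable.clm_apply_of_forall_apply [MeasurableSpace α]
    {μ : Measure α} {L : α → E →L[𝕜] F} (hL : ∀ v, AEStronglyMeasurable (fun a => L a v) μ)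
    {z : α → E} (hz : AEStronglyMeasurable z μ) :
    AEStronglyMeasurable (fun a => L a (z a)) μ := by
  obtain ⟨g, hg, hzg⟩ := hz
  have hsimple : ∀ f : SimpleFunc α E, AEStronglyMeasurable (fun a => L a (f a)) μ := by
    intro f
    induction f using SimpleFunc.induction with
    | @const c s hs =>
      have : (fun a => L a (SimpleFunc.piecewise s hs (SimpleFunc.const α c)
          (SimpleFunc.const α 0) a)) = s.indicator fun a => L a c := by
        ext a
        by_cases ha : a ∈ s <;> simp [ha]
      rw [this]
      exact (hL c).indicator hs
    | @add f f' _ hf hf' =>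
      exact (hf.add hf').congr (.of_forall fun a => by simp)
  refine aestronglyMeasurable_of_tendsto_ae atTop (fun n => hsimple (hg.approx n)) ?_
  filter_upwards [hzg] with a ha
  rw [ha]
  exact ((L a).continuous.tendsto _).comp (hg.tendsto_approx a)

theorem IsCompact.integrableOn_clm_apply [TopologicalSpace α] [T2Space α] [MeasurableSpace α]
    [OpensMeasurableSpace α] [CompleteSpace E] {μ : Measure α} {K : Set α} (hK : IsCompact K)
    {L : α → E →L[𝕜] F} (hL : ∀ v, ContinuousOn (fun a => L a v) K) {z : α → E}
    (hz : IntegrableOn z K μ) : IntegrableOn (fun a => L a (z a)) K μ := by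
  obtain ⟨M, hM⟩ := hK.exists_forall_opNorm_le hL
  refine (hz.norm.const_mul M).mono' ?_ ?_
  · exact hz.1.clm_apply_of_forall_apply
      fun v => (hL v).aestronglyMeasurable_of_isCompact hK hK.measurableSet
  · filter_upwards [ae_restrict_mem hK.measurableSet] with a ha
    exact (L a).le_of_opNorm_le (hM a ha) _

end Family

section LebesguePoint

variable {E F : Type*} [NormedAddCommGroup E] [NormedAddCommGroup F]

/-- One-sided, since the integral equation only controls integrals over intervals ending at `t`. -/
def IsLeftLebesguePoint (g : ℝ → F) (t : ℝ) : Prop :=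
  Tendsto (fun r => ⨍ s in Ioc (t - r) t, ‖g s - g t‖) (𝓝[>] 0) (𝓝 0)

theorem MeasureTheory.LocallyIntegrable.ae_isLeftLebesguePoint {g : ℝ → F}
    (hg : LocallyIntegrable g) : ∀ᵐ t, IsLeftLebesguePoint g t := by
  filter_upwards [IsUnifLocDoublingMeasure.ae_tendsto_average_norm_sub volume hg 1] with t ht
  have hball : ∀ r, Metric.closedBall (t - r / 2) (r / 2) = Icc (t - r) t := fun r => by
    rw [Real.closedBall_eq_Icc]; congr 1 <;> ring
  have hδ : Tendsto (fun r : ℝ => r / 2) (𝓝[>] 0) (𝓝[>] 0) :=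
    tendsto_nhdsWithin_of_tendsto_nhds_of_eventually_within _
      ((continuous_id.div_const 2).tendsto' 0 0 (by simp) |>.mono_left nhdsWithin_le_nhds)
      (eventually_nhdsWithin_of_forall fun r (hr : 0 < r) => half_pos hr)
  have hmem : ∀ᶠ r in 𝓝[>] (0 : ℝ), t ∈ Metric.closedBall (t - r / 2) (1 * (r / 2)) :=
    eventually_nhdsWithin_of_forall fun r (hr : 0 < r) => by
      rw [one_mul, hball]; exact ⟨by linarith, le_rfl⟩
  simpa only [IsLeftLebesguePoint, hball, setAverage_congr Ioc_ae_eq_Icc] using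
    ht (fun r => t - r / 2) (fun r => r / 2) hδ hmem

theorem setAverage_Ioc_sub_left [NormedSpace ℝ F] (f : ℝ → F) (t : ℝ) {r : ℝ} (hr : 0 ≤ r) :
    ⨍ s in Ioc (t - r) t, f s = r⁻¹ • ∫ s in Ioc (t - r) t, f s := by
  rw [setAverage_eq, measureReal_def, Real.volume_Ioc, ENNReal.toReal_ofReal (by linarith),
    sub_sub_cancel]

theorem ContinuousWithinAt.isLeftLebesguePoint {g : ℝ → F} {t : ℝ}
    (hg : ContinuousWithinAt g (Iic t) t) : IsLeftLebesguePoint g t := by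
  rw [IsLeftLebesguePoint, Metric.tendsto_nhdsWithin_nhds]
  intro ε hε
  obtain ⟨δ, hδ, hgδ⟩ := Metric.continuousWithinAt_iff.1 hg (ε / 2) (half_pos hε)
  refine ⟨δ, hδ, fun r (hr : 0 < r) hrδ => ?_⟩
  rw [Real.dist_0_eq_abs, abs_of_pos hr] at hrδ
  have hbound : ‖∫ s in Ioc (t - r) t, ‖g s - g t‖‖ ≤ ε / 2 * r := by
    have := norm_setIntegral_le_of_norm_le_const (f := fun s => ‖g s - g t‖) (C := ε / 2)
      (measure_Ioc_lt_top (μ := volume)) fun s (hs : s ∈ Ioc (t - r) t) => by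
        have hst : dist s t < δ := by
          rw [Real.dist_eq, abs_of_nonpos (by linarith [hs.2])]; linarith [hs.1]
        rw [norm_norm, ← dist_eq_norm]
        exact (hgδ hs.2 hst).le
    simpa [measureReal_def, Real.volume_Ioc, hr.le] using this
  rw [dist_zero_right, setAverage_Ioc_sub_left _ _ hr.le, norm_smul, norm_inv,
    Real.norm_of_nonneg hr.le]
  calc r⁻¹ * ‖∫ s in Ioc (t - r) t, ‖g s - g t‖‖ ≤ r⁻¹ * (ε / 2 * r) := by gcongr
    _ < ε := by field_simp; linarith

variable [NormedSpace ℝ E] [NormedSpace ℝ F]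

theorem IsLeftLebesguePoint.tendsto_setAverage [CompleteSpace F] {g : ℝ → F} {t : ℝ}
    (hg : IsLeftLebesguePoint g t)
    (hint : ∀ᶠ r in 𝓝[>] 0, IntegrableOn g (Ioc (t - r) t)) :
    Tendsto (fun r => ⨍ s in Ioc (t - r) t, g s) (𝓝[>] 0) (𝓝 (g t)) := by
  rw [tendsto_iff_norm_sub_tendsto_zero]
  refine squeeze_zero' (.of_forall fun r => norm_nonneg _) ?_ hg
  filter_upwards [hint, self_mem_nhdsWithin] with r hr (hr0 : 0 < r)
  have hconst : IntegrableOn (fun _ => g t) (Ioc (t - r) t) := integrableOn_const (by simp)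
  have hsub : (⨍ s in Ioc (t - r) t, g s) - g t = ⨍ s in Ioc (t - r) t, (g s - g t) := by
    rw [setAverage_Ioc_sub_left _ _ hr0.le, setAverage_Ioc_sub_left _ _ hr0.le,
      integral_sub hr hconst, setIntegral_const, measureReal_def, Real.volume_Ioc,
      ENNReal.toReal_ofReal (by linarith), sub_sub_cancel, smul_sub, inv_smul_smul₀ hr0.ne']
  rw [hsub, setAverage_Ioc_sub_left _ _ hr0.le, setAverage_Ioc_sub_left _ _ hr0.le, norm_smul,
    norm_inv, Real.norm_of_nonneg hr0.le, smul_eq_mul]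
  gcongr
  exact norm_integral_le_integral_norm _

theorem IsLeftLebesguePoint.clm_apply [CompleteSpace E] {L : ℝ → E →L[ℝ] F} {y : ℝ → E}
    {a t : ℝ} (hy : IsLeftLebesguePoint y t) (hat : a < t)
    (hL : ∀ v, ContinuousOn (fun s => L s v) (Icc a t)) (hyi : IntegrableOn y (Icc a t)) :
    IsLeftLebesguePoint (fun s => L s (y s)) t := by
  obtain ⟨M, hM⟩ := isCompact_Icc.exists_forall_opNorm_le hL
  have hLt : IsLeftLebesguePoint (fun s => L s (y t)) t :=
    ((hL (y t)) t ⟨hat.le, le_rfl⟩).mono_of_mem_nhdsWithin (Icc_mem_nhdsLE hat)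
      |>.isLeftLebesguePoint
  refine squeeze_zero' (.of_forall fun r => ?_) ?_ (by simpa using (hy.const_mul M).add hLt)
  · rw [setAverage_eq]
    exact smul_nonneg (inv_nonneg.2 measureReal_nonneg) (integral_nonneg fun _ => norm_nonneg _)
  filter_upwards [Ioo_mem_nhdsGT (sub_pos.2 hat)] with r ⟨hr0, hrt⟩
  have hIoc : Ioc (t - r) t ⊆ Icc a t := fun s hs => ⟨by linarith [hs.1], hs.2⟩
  have hyInt : IntegrableOn (fun s => ‖y s - y t‖) (Ioc (t - r) t) :=
    ((hyi.mono_set hIoc).sub (integrableOn_const (by simp))).norm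
  have hLInt : IntegrableOn (fun s => ‖L s (y t) - L t (y t)‖) (Ioc (t - r) t) :=
    (((hL (y t)).integrableOn_Icc.mono_set hIoc).sub (integrableOn_const (by simp))).norm
  have hpt : ∀ s ∈ Ioc (t - r) t,
      ‖L s (y s) - L t (y t)‖ ≤ M * ‖y s - y t‖ + ‖L s (y t) - L t (y t)‖ := fun s hs =>
    calc ‖L s (y s) - L t (y t)‖ = ‖L s (y s - y t) + (L s (y t) - L t (y t))‖ := by
          rw [map_sub, sub_add_sub_cancel]
      _ ≤ M * ‖y s - y t‖ + ‖L s (y t) - L t (y t)‖ :=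
          (norm_add_le _ _).trans (add_le_add_left ((L s).le_of_opNorm_le (hM s (hIoc hs)) _) _)
  simp only [setAverage_Ioc_sub_left _ _ hr0.le, smul_eq_mul]
  have hsplit : (M * ∫ s in Ioc (t - r) t, ‖y s - y t‖) + ∫ s in Ioc (t - r) t,
      ‖L s (y t) - L t (y t)‖ =
      ∫ s in Ioc (t - r) t, (M * ‖y s - y t‖ + ‖L s (y t) - L t (y t)‖) := by
    rw [integral_add (hyInt.const_mul M) hLInt, integral_const_mul]
  rw [← mul_assoc, mul_comm M, mul_assoc, ← mul_add, hsplit]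
  refine mul_le_mul_of_nonneg_left ?_ (inv_nonneg.2 hr0.le)
  exact integral_mono_of_nonneg (.of_forall fun s => norm_nonneg _)
    ((hyInt.const_mul M).add hLInt) ((ae_restrict_mem measurableSet_Ioc).mono hpt)

end LebesguePoint

theorem inhomogeneity_ae_unique_general
    {X : Type*} [NormedAddCommGroup X] [NormedSpace ℝ X] [CompleteSpace X]
    (T : ℝ → ℝ → X →L[ℝ] X)
    (hId : ∀ t, T t t = ContinuousLinearMap.id ℝ X)
    (hContB : ∀ τ (u : X), ContinuousOn (fun s => T τ s u) (Iic τ))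
    (x y₁ y₂ : ℝ → X)
    (hy₁ : LocallyIntegrable y₁ volume)
    (hy₂ : LocallyIntegrable y₂ volume)
    (hx₁ : ∀ τ t, τ ≤ t → x t = T t τ (x τ) + ∫ s in Ioc τ t, T t s (y₁ s))
    (hx₂ : ∀ τ t, τ ≤ t → x t = T t τ (x τ) + ∫ s in Ioc τ t, T t s (y₂ s)) :
    ∀ᵐ t ∂(volume : Measure ℝ), y₁ t = y₂ t := by
  have hT : ∀ t a, ∀ v, ContinuousOn (fun s => T t s v) (Icc a t) :=
    fun t a v => (hContB t v).mono Icc_subset_Iic_self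
  have hint : ∀ {z : ℝ → X}, LocallyIntegrable z volume → ∀ a t,
      IntegrableOn (fun s => T t s (z s)) (Ioc a t) := fun hz a t =>
    (isCompact_Icc.integrableOn_clm_apply (hT t a) (hz.integrableOn_isCompact isCompact_Icc))
      |>.mono_set Ioc_subset_Icc_self
  have hy : LocallyIntegrable (y₁ - y₂) volume := hy₁.sub hy₂
  have hzero : ∀ a t, a ≤ t → ∫ s in Ioc a t, T t s ((y₁ - y₂) s) = 0 := fun a t hat => by
    simp only [Pi.sub_apply, map_sub]
    rw [integral_sub (hint hy₁ a t) (hint hy₂ a t), sub_eq_zero]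
    exact add_left_cancel ((hx₁ a t hat).symm.trans (hx₂ a t hat))
  filter_upwards [hy.ae_isLeftLebesguePoint] with t ht
  have hlim := (ht.clm_apply (sub_one_lt t) (hT t _) (hy.integrableOn_isCompact isCompact_Icc))
    |>.tendsto_setAverage (.of_forall fun r => hint hy _ t)
  have hzero_avg : ∀ᶠ r in 𝓝[>] (0 : ℝ), ⨍ s in Ioc (t - r) t, T t s ((y₁ - y₂) s) = 0 :=
    eventually_nhdsWithin_of_forall fun r (hr : 0 < r) => by
      rw [setAverage_eq, hzero _ _ (by linarith), smul_zero]
  have := tendsto_nhds_unique hlim (tendsto_const_nhds.congr' (hzero_avg.mono fun _ h => h.symm))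
  simpa [hId, sub_eq_zero] using this

/-- If an evolutionary family `(T t τ)_{t ≥ τ}` and a function `x` satisfy
the integral equation simultaneously with two locally integrable inhomogeneities `y₁` and
`y₂`, then `y₁ = y₂` almost everywhere. -/
theorem inhomogeneity_ae_unique
    {X : Type*} [NormedAddCommGroup X] [NormedSpace ℝ X] [CompleteSpace X]
    (T : ℝ → ℝ → X →L[ℝ] X)
    (hId : ∀ t, T t t = ContinuousLinearMap.id ℝ X)
    (hCoc : ∀ τ s t, τ ≤ s → s ≤ t → ∀ u, T t s (T s τ u) = T t τ u)
    (hCont : ∀ τ (u : X), ContinuousOn (fun t => T t τ u) (Ici τ))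
    (hContB : ∀ τ (u : X), ContinuousOn (fun s => T τ s u) (Iic τ))
    (x y₁ y₂ : ℝ → X)
    (hy₁ : LocallyIntegrable y₁ volume)
    (hy₂ : LocallyIntegrable y₂ volume)
    (hx₁ : ∀ τ t, τ ≤ t → x t = T t τ (x τ) + ∫ s in Ioc τ t, T t s (y₁ s))
    (hx₂ : ∀ τ t, τ ≤ t → x t = T t τ (x τ) + ∫ s in Ioc τ t, T t s (y₂ s)) :
    ∀ᵐ t ∂(volume : Measure ℝ), y₁ t = y₂ t :=
  inhomogeneity_ae_unique_general T hId hContB x y₁ y₂ hy₁ hy₂ hx₁ hx₂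
end

section
/- Suppose the evolutionary family (T(t,τ))_{t≥τ} admits an exponential dichotomy with respect to the family of norms ‖·‖_t, with projections P(τ), Q(τ)=I−P(τ), and constants a<0<b, D>0. For y ∈ L^q (1≤q≤∞), the function x₁(t) = ∫_{-∞}^t T(t,τ)P(τ)y(τ) dτ is well-defined and satisfies ‖x₁(t)‖_t ≤ (D/(1−e^a))·‖y‖_q for all t ∈ ℝ. -/
open MeasureTheory Set Filter
open scoped ENNReal

/-- The `L^p`-norm of a function `f : ℝ → X` with respect to a family of norms
`N t = ‖·‖_t` on `X` (ess sup when `p = ∞`). -/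
noncomputable def famLpNorm {X : Type*} [NormedAddCommGroup X]
    (N : ℝ → X → ℝ) (p : ℝ≥0∞) (f : ℝ → X) : ℝ≥0∞ :=
  if p = ∞ then essSup (fun t => ENNReal.ofReal (N t (f t))) volume
  else (∫⁻ t, ENNReal.ofReal (N t (f t)) ^ p.toReal) ^ (1 / p.toReal)

/-- Membership in `Y₁ = L^p ∩ C_b` with respect to the family of norms `N`. -/
def MemY1 {X : Type*} [NormedAddCommGroup X]
    (N : ℝ → X → ℝ) (p : ℝ≥0∞) (x : ℝ → X) : Prop :=
  Continuous x ∧ (∃ M, ∀ t, N t (x t) ≤ M) ∧ famLpNorm N p x < ∞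

/-- Membership in `Y₂ = L^q` with respect to the family of norms `N`. -/
def MemY2 {X : Type*} [NormedAddCommGroup X]
    (N : ℝ → X → ℝ) (q : ℝ≥0∞) (y : ℝ → X) : Prop :=
  AEStronglyMeasurable y volume ∧ famLpNorm N q y < ∞

/-- `x` solves the inhomogeneous integral equation
`x t = T t τ (x τ) + ∫_τ^t T t s (y s) ds` associated with the evolutionary family `T`. -/
def SolvesEq {X : Type*} [NormedAddCommGroup X] [NormedSpace ℝ X]
    (T : ℝ → ℝ → X →L[ℝ] X) (x y : ℝ → X) : Prop :=
  ∀ τ t, τ ≤ t → x t = T t τ (x τ) + ∫ s in Ioc τ t, T t s (y s)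

/-- Exponential dichotomy of the evolutionary family `T` with respect to the family of
norms `N`, with projections `P t`, inverse maps `S τ t` (the inverses of
`T t τ : Ker P τ → Ker P t`, applied after `Q t = I - P t`), and constants `a < 0 < b`,
`D > 0`. -/
def IsDichotomy {X : Type*} [NormedAddCommGroup X] [NormedSpace ℝ X]
    (T : ℝ → ℝ → X →L[ℝ] X) (N : ℝ → X → ℝ)
    (P : ℝ → X →L[ℝ] X) (S : ℝ → ℝ → X →L[ℝ] X) (a b D : ℝ) : Prop :=
  a < 0 ∧ 0 < b ∧ 0 < D ∧
  (∀ t, (P t).comp (P t) = P t) ∧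
  (∀ τ t, τ ≤ t → (P t).comp (T t τ) = (T t τ).comp (P τ)) ∧
  (∀ τ t, τ ≤ t → ∀ u, T t τ (S τ t (u - P t u)) = u - P t u) ∧
  (∀ τ t, τ ≤ t → ∀ u, S τ t (T t τ u - P t (T t τ u)) = u - P τ u) ∧
  (∀ τ t, τ ≤ t → ∀ u, P τ (S τ t (u - P t u)) = 0) ∧
  (∀ τ t u, τ ≤ t → N t (T t τ (P τ u)) ≤ D * Real.exp (a * (t - τ)) * N τ u) ∧
  (∀ τ t u, τ ≤ t → N τ (S τ t (u - P t u)) ≤ D * Real.exp (-b * (t - τ)) * N t u)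


/-! The integrand is bounded in `‖·‖_t` by `D e^{a(t-τ)} ‖y τ‖_τ`. Cutting `(-∞, t]` into the unit
intervals `(t-m-1, t-m]`, the weight is at most `e^{am}` on the `m`-th one and, since an interval
of length one has measure `≤ 1`, Hölder bounds `∫ ‖y τ‖_τ dτ` over it by `‖y‖_q`; summing the
geometric series gives `D / (1 - e^a) · ‖y‖_q`. This bounds `‖x₁ t‖_t` because `‖·‖_t` is a
continuous seminorm, which by Hahn–Banach is attained by a continuous linear functional dominated
by it, and such a functional commutes with the integral. -/

section Seminorm

variable {E : Type*} [NormedAddCommGroup E] [NormedSpace ℝ E]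

theorem Seminorm.continuous_of_le_mul_norm (p : Seminorm ℝ E) (C : ℝ)
    (hC : ∀ x, p x ≤ C * ‖x‖) : Continuous p :=
  LipschitzWith.continuous (K := C.toNNReal) <| LipschitzWith.of_dist_le_mul fun x y => by
    rw [Real.dist_eq, dist_eq_norm]
    exact (abs_sub_map_le_sub p x y).trans
      ((hC _).trans (mul_le_mul_of_nonneg_right C.le_coe_toNNReal (norm_nonneg _)))

theorem Seminorm.exists_dual_eq_of_continuous (p : Seminorm ℝ E) (hp : Continuous p) (v : E) :
    ∃ φ : StrongDual ℝ E, φ v = p v ∧ ∀ x, φ x ≤ p x := by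
  by_cases hv : v = 0
  · exact ⟨0, by simp [hv], fun x => by simp⟩
  let f : E →ₗ.[ℝ] ℝ := LinearPMap.mkSpanSingleton (K := ℝ) v (p v) hv
  have hfp : ∀ x, f.toFun x ≤ p x := by
    rintro ⟨_, hx⟩
    obtain ⟨c, rfl⟩ := Submodule.mem_span_singleton.mp hx
    calc f ⟨c • v, hx⟩ = c * p v := LinearPMap.mkSpanSingleton'_apply v (p v) _ c hx
      _ ≤ |c| * p v := mul_le_mul_of_nonneg_right (le_abs_self c) (apply_nonneg p v)
      _ = p (c • v) := by rw [map_smul_eq_mul, Real.norm_eq_abs]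
  obtain ⟨φ, hφf, hφp⟩ :=
    Module.Dual.exists_continuous_extension_of_le_seminorm_real f.domain f.toFun hp hfp
  refine ⟨φ, ?_, fun x => (le_abs_self _).trans (hφp x)⟩
  exact (hφf ⟨v, Submodule.mem_span_singleton_self v⟩).trans
    (LinearPMap.mkSpanSingleton_apply ℝ ℝ hv (p v))

variable {α : Type*} [MeasurableSpace α] {μ : Measure α}

theorem Seminorm.map_integral_le_integral (p : Seminorm ℝ E) (hp : Continuous p) {f : α → E}
    (hf : Integrable f μ) : p (∫ x, f x ∂μ) ≤ ∫ x, p (f x) ∂μ := by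
  by_cases hE : CompleteSpace E
  swap
  · -- the Bochner integral is `0` in an incomplete space
    rw [integral_of_not_completeSpace hE, map_zero]
    exact integral_nonneg fun x => apply_nonneg p (f x)
  obtain ⟨φ, hφv, hφp⟩ := p.exists_dual_eq_of_continuous hp (∫ x, f x ∂μ)
  obtain ⟨C, -, hC⟩ := p.bound_of_continuous_normedSpace hp
  have hpf : Integrable (fun x => p (f x)) μ :=
    (hf.norm.const_mul C).mono' (hp.comp_aestronglyMeasurable hf.1)
      (Eventually.of_forall fun x => by
        simpa only [Real.norm_eq_abs, abs_of_nonneg (apply_nonneg p _)] using hC (f x))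
  calc p (∫ x, f x ∂μ) = ∫ x, φ (f x) ∂μ := by rw [← hφv, φ.integral_comp_comm hf]
    _ ≤ ∫ x, p (f x) ∂μ := integral_mono (φ.integrable_comp hf) hpf fun x => hφp (f x)

theorem Seminorm.map_integral_le_toReal_lintegral (p : Seminorm ℝ E) (hp : Continuous p)
    {f : α → E} (hf : Integrable f μ) :
    p (∫ x, f x ∂μ) ≤ (∫⁻ x, ENNReal.ofReal (p (f x)) ∂μ).toReal :=
  (p.map_integral_le_integral hp hf).trans_eq <|
    integral_eq_lintegral_of_nonneg_ae (ae_of_all _ fun x => apply_nonneg p (f x))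
      (hp.comp_aestronglyMeasurable hf.1)

theorem Seminorm.integrable_of_lintegral_ne_top (p : Seminorm ℝ E) (hp : ∀ x, ‖x‖ ≤ p x)
    {f : α → E} (hf : AEStronglyMeasurable f μ)
    (hfin : ∫⁻ x, ENNReal.ofReal (p (f x)) ∂μ ≠ ∞) : Integrable f μ := by
  refine ⟨hf, lt_of_le_of_lt (lintegral_mono fun x => ?_) hfin.lt_top⟩
  rw [← ofReal_norm]
  exact ENNReal.ofReal_le_ofReal (hp (f x))

end Seminorm

namespace MeasureTheory

variable {α E : Type*} [MeasurableSpace α] {F : α → E → ℝ}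

theorem SimpleFunc.measurable_apply_of_measurable (hFm : ∀ u, Measurable fun a => F a u)
    (g : SimpleFunc α E) : Measurable fun a => F a (g a) := by
  have hsum : (fun a => F a (g a)) =
      fun a => ∑ c ∈ g.range, (g ⁻¹' {c}).indicator (fun b => F b c) a := by
    funext a
    rw [Finset.sum_eq_single_of_mem (g a) (g.mem_range_self a)]
    · exact (Set.indicator_of_mem (mem_preimage.mpr rfl) fun b => F b (g a)).symm
    · intro c _ hc
      exact Set.indicator_of_notMem (fun h => hc h.symm) _
  rw [hsum]
  exact Finset.measurable_sum _ fun c _ => (hFm c).indicator (g.measurableSet_fiber c)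

variable [TopologicalSpace E]

theorem StronglyMeasurable.measurable_apply_of_continuous_of_measurable
    (hFc : ∀ a, Continuous (F a)) (hFm : ∀ u, Measurable fun a => F a u)
    {f : α → E} (hf : StronglyMeasurable f) : Measurable fun a => F a (f a) :=
  measurable_of_tendsto_metrizable' atTop
    (fun n => SimpleFunc.measurable_apply_of_measurable hFm (hf.approx n))
    (tendsto_pi_nhds.mpr fun a => ((hFc a).tendsto _).comp (hf.tendsto_approx a))

theorem AEStronglyMeasurable.aemeasurable_apply_of_continuous_of_measurable {μ : Measure α}
    (hFc : ∀ a, Continuous (F a)) (hFm : ∀ u, Measurable fun a => F a u)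
    {f : α → E} (hf : AEStronglyMeasurable f μ) : AEMeasurable (fun a => F a (f a)) μ := by
  obtain ⟨f', hf'm, hff'⟩ := hf
  refine ⟨fun a => F a (f' a),
    hf'm.measurable_apply_of_continuous_of_measurable hFc hFm, ?_⟩
  filter_upwards [hff'] with a ha
  rw [ha]

end MeasureTheory

theorem setLIntegral_enorm_le_eLpNorm_of_measure_le_one {α E : Type*} [MeasurableSpace α]
    {μ : Measure α} [NormedAddCommGroup E] {f : α → E} {q : ℝ≥0∞} (hq : 1 ≤ q)
    (hf : AEStronglyMeasurable f μ) {A : Set α} (hA : μ A ≤ 1) :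
    ∫⁻ x in A, ‖f x‖ₑ ∂μ ≤ eLpNorm f q μ := by
  have hexp : 0 ≤ 1 / (1 : ℝ≥0∞).toReal - 1 / q.toReal := by
    rw [ENNReal.toReal_one, div_one, sub_nonneg]
    rcases eq_or_ne q ∞ with rfl | hq_top
    · simp
    · exact div_le_one_of_le₀ (by simpa using ENNReal.toReal_mono hq_top hq) ENNReal.toReal_nonneg
  calc ∫⁻ x in A, ‖f x‖ₑ ∂μ = eLpNorm f 1 (μ.restrict A) :=
        (eLpNorm_one_eq_lintegral_enorm (f := f)).symm
    _ ≤ eLpNorm f q (μ.restrict A) *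
          μ.restrict A univ ^ (1 / (1 : ℝ≥0∞).toReal - 1 / q.toReal) :=
      eLpNorm_le_eLpNorm_mul_rpow_measure_univ hq hf.restrict
    _ ≤ eLpNorm f q μ * 1 := by
      gcongr
      · exact Measure.restrict_le_self
      · exact ENNReal.rpow_le_one (by rwa [Measure.restrict_apply_univ]) hexp
    _ = eLpNorm f q μ := mul_one _

theorem Iic_subset_iUnion_Ioc_sub_nat (t : ℝ) :
    Iic t ⊆ ⋃ m : ℕ, Ioc (t - (m + 1)) (t - m) := by
  intro τ hτ
  refine mem_iUnion.mpr ⟨⌊t - τ⌋₊, ?_, ?_⟩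
  · linarith [Nat.lt_floor_add_one (t - τ)]
  · linarith [Nat.floor_le (sub_nonneg.mpr hτ : 0 ≤ t - τ)]

theorem setLIntegral_Iic_exp_mul_le {a : ℝ} (ha : a < 0) (t : ℝ) {g : ℝ → ℝ≥0∞} {K : ℝ≥0∞}
    (hK : ∀ m : ℕ, ∫⁻ τ in Ioc (t - (m + 1)) (t - m), g τ ≤ K) :
    ∫⁻ τ in Iic t, ENNReal.ofReal (Real.exp (a * (t - τ))) * g τ ≤
      ENNReal.ofReal (1 - Real.exp a)⁻¹ * K := by
  have hweight : ∀ m : ℕ, ∫⁻ τ in Ioc (t - (m + 1)) (t - m),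
      ENNReal.ofReal (Real.exp (a * (t - τ))) * g τ ≤ ENNReal.ofReal (Real.exp a) ^ m * K := by
    intro m
    calc ∫⁻ τ in Ioc (t - (m + 1)) (t - m), ENNReal.ofReal (Real.exp (a * (t - τ))) * g τ
        ≤ ∫⁻ τ in Ioc (t - (m + 1)) (t - m), ENNReal.ofReal (Real.exp a) ^ m * g τ := by
          refine setLIntegral_mono' measurableSet_Ioc fun τ hτ => ?_
          rw [← ENNReal.ofReal_pow (Real.exp_nonneg a), ← Real.exp_nat_mul]
          have hτm : (m : ℝ) ≤ t - τ := by linarith [hτ.2]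
          gcongr ENNReal.ofReal (Real.exp ?_) * _
          nlinarith
      _ ≤ ENNReal.ofReal (Real.exp a) ^ m * K := by
          rw [lintegral_const_mul' _ _ (by simp)]
          gcongr
          exact hK m
  calc ∫⁻ τ in Iic t, ENNReal.ofReal (Real.exp (a * (t - τ))) * g τ
      ≤ ∑' m : ℕ, ∫⁻ τ in Ioc (t - (m + 1)) (t - m),
          ENNReal.ofReal (Real.exp (a * (t - τ))) * g τ :=
        (lintegral_mono_set (Iic_subset_iUnion_Ioc_sub_nat t)).trans (lintegral_iUnion_le _ _)
    _ ≤ ∑' m : ℕ, ENNReal.ofReal (Real.exp a) ^ m * K := ENNReal.tsum_le_tsum hweight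
    _ = ENNReal.ofReal (1 - Real.exp a)⁻¹ * K := by
      rw [ENNReal.tsum_mul_right, ENNReal.tsum_geometric,
        ENNReal.ofReal_inv_of_pos (by linarith [Real.exp_lt_one_iff.mpr ha]),
        ENNReal.ofReal_sub _ (Real.exp_nonneg a), ENNReal.ofReal_one]

theorem setLIntegral_Iic_le_of_le_exp_mul_norm {E : Type*} [NormedAddCommGroup E] {a D t : ℝ}
    (ha : a < 0) (hD : 0 ≤ D) {f : ℝ → ℝ} {g : ℝ → E}
    (hfg : ∀ τ ≤ t, f τ ≤ D * Real.exp (a * (t - τ)) * ‖g τ‖)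
    (hg : AEStronglyMeasurable g volume) {q : ℝ≥0∞} (hq : 1 ≤ q) :
    ∫⁻ τ in Iic t, ENNReal.ofReal (f τ) ≤
      ENNReal.ofReal (D / (1 - Real.exp a)) * eLpNorm g q volume :=
  calc ∫⁻ τ in Iic t, ENNReal.ofReal (f τ)
      ≤ ∫⁻ τ in Iic t, ENNReal.ofReal D *
          (ENNReal.ofReal (Real.exp (a * (t - τ))) * ‖g τ‖ₑ) := by
        refine setLIntegral_mono' measurableSet_Iic fun τ hτ => ?_
        rw [← ofReal_norm, ← ENNReal.ofReal_mul (Real.exp_nonneg _),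
          ← ENNReal.ofReal_mul hD, ← mul_assoc]
        exact ENNReal.ofReal_le_ofReal (hfg τ hτ)
    _ ≤ ENNReal.ofReal D * (ENNReal.ofReal (1 - Real.exp a)⁻¹ * eLpNorm g q volume) := by
        rw [lintegral_const_mul' _ _ ENNReal.ofReal_ne_top]
        gcongr
        exact setLIntegral_Iic_exp_mul_le ha t fun m =>
          setLIntegral_enorm_le_eLpNorm_of_measure_le_one hq hg (by simp [Real.volume_Ioc])
    _ = ENNReal.ofReal (D / (1 - Real.exp a)) * eLpNorm g q volume := by
        rw [← mul_assoc, ← ENNReal.ofReal_mul hD, div_eq_mul_inv]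

theorem famLpNorm_eq_eLpNorm {X : Type*} [NormedAddCommGroup X] {N : ℝ → X → ℝ}
    (hN : ∀ t u, 0 ≤ N t u) {p : ℝ≥0∞} (hp : p ≠ 0) (f : ℝ → X) :
    famLpNorm N p f = eLpNorm (fun t => N t (f t)) p volume := by
  have henorm : ∀ t, ‖N t (f t)‖ₑ = ENNReal.ofReal (N t (f t)) :=
    fun t => Real.enorm_eq_ofReal (hN t (f t))
  unfold famLpNorm
  split_ifs with hp_top
  · rw [hp_top, eLpNorm_exponent_top, eLpNormEssSup]
    simp_rw [henorm]
  · rw [eLpNorm_eq_lintegral_rpow_enorm_toReal hp hp_top]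
    simp_rw [henorm]

theorem stable_convolution_bound_general
    {X : Type*} [NormedAddCommGroup X] [NormedSpace ℝ X]
    (T : ℝ → ℝ → X →L[ℝ] X) (N : ℝ → X → ℝ) (C ε : ℝ)
    (hN₁ : ∀ t u, ‖u‖ ≤ N t u)
    (hN₂ : ∀ t (u : X), N t u ≤ C * Real.exp (ε * |t|) * ‖u‖)
    (hNadd : ∀ t (u v : X), N t (u + v) ≤ N t u + N t v)
    (hNsmul : ∀ t (r : ℝ) (u : X), N t (r • u) = |r| * N t u)
    (hNmeas : ∀ u : X, Measurable fun t => N t u)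
    (P : ℝ → X →L[ℝ] X) (S : ℝ → ℝ → X →L[ℝ] X) (a b D : ℝ)
    (hdich : IsDichotomy T N P S a b D)
    (q : ℝ≥0∞) (hq : 1 ≤ q)
    (y : ℝ → X) (hy : MemY2 N q y)
    (hmeas : ∀ t, AEStronglyMeasurable (fun τ => T t τ (P τ (y τ))) volume) :
    ∀ t : ℝ, IntegrableOn (fun τ => T t τ (P τ (y τ))) (Iic t) volume ∧
      N t (∫ τ in Iic t, T t τ (P τ (y τ))) ≤
        D / (1 - Real.exp a) * (famLpNorm N q y).toReal := by
  intro t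
  obtain ⟨ha, -, hD, -, -, -, -, -, hstable, -⟩ := hdich
  have hN0 : ∀ s (u : X), 0 ≤ N s u := fun s u => (norm_nonneg u).trans (hN₁ s u)
  let p : ℝ → Seminorm ℝ X := fun s => .of (N s) (hNadd s) (hNsmul s)
  have hp : ∀ s, Continuous (p s) := fun s => (p s).continuous_of_le_mul_norm _ (hN₂ s)
  have hyN : AEStronglyMeasurable (fun τ => N τ (y τ)) volume :=
    (hy.1.aemeasurable_apply_of_continuous_of_measurable hp hNmeas).aestronglyMeasurable
  have hbound : ∫⁻ τ in Iic t, ENNReal.ofReal (N t (T t τ (P τ (y τ)))) ≤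
      ENNReal.ofReal (D / (1 - Real.exp a)) * famLpNorm N q y := by
    rw [famLpNorm_eq_eLpNorm hN0 (zero_lt_one.trans_le hq).ne']
    refine setLIntegral_Iic_le_of_le_exp_mul_norm ha hD.le (fun τ hτ => ?_) hyN hq
    rw [Real.norm_of_nonneg (hN0 τ (y τ))]
    exact hstable τ t (y τ) hτ
  have hfin : ENNReal.ofReal (D / (1 - Real.exp a)) * famLpNorm N q y ≠ ∞ :=
    ENNReal.mul_ne_top ENNReal.ofReal_ne_top hy.2.ne
  have hint : IntegrableOn (fun τ => T t τ (P τ (y τ))) (Iic t) :=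
    (p t).integrable_of_lintegral_ne_top (hN₁ t) (hmeas t).restrict
      (ne_top_of_le_ne_top hfin hbound)
  refine ⟨hint, ?_⟩
  calc N t (∫ τ in Iic t, T t τ (P τ (y τ)))
      ≤ (∫⁻ τ in Iic t, ENNReal.ofReal (N t (T t τ (P τ (y τ))))).toReal :=
        (p t).map_integral_le_toReal_lintegral (hp t) hint
    _ ≤ (ENNReal.ofReal (D / (1 - Real.exp a)) * famLpNorm N q y).toReal :=
        ENNReal.toReal_mono hfin hbound
    _ = D / (1 - Real.exp a) * (famLpNorm N q y).toReal := by
        rw [ENNReal.toReal_mul, ENNReal.toReal_ofReal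
          (div_nonneg hD.le (sub_nonneg.mpr (Real.exp_le_one_iff.mpr ha.le)))]

/-- Under an exponential dichotomy with respect to the family of norms,
for `y ∈ L^q` the stable-part convolution
`x₁ t = ∫_{-∞}^t T t τ (P τ (y τ)) dτ` is well defined and satisfies
`‖x₁ t‖_t ≤ D/(1 - e^a) · ‖y‖_q` for every `t`. -/
theorem stable_convolution_bound
    {X : Type*} [NormedAddCommGroup X] [NormedSpace ℝ X] [CompleteSpace X]
    (T : ℝ → ℝ → X →L[ℝ] X) (N : ℝ → X → ℝ) (C ε : ℝ)
    (hN₁ : ∀ t u, ‖u‖ ≤ N t u)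
    (hN₂ : ∀ t (u : X), N t u ≤ C * Real.exp (ε * |t|) * ‖u‖)
    (hNadd : ∀ t (u v : X), N t (u + v) ≤ N t u + N t v)
    (hNsmul : ∀ t (r : ℝ) (u : X), N t (r • u) = |r| * N t u)
    (hNmeas : ∀ u : X, Measurable fun t => N t u)
    (P : ℝ → X →L[ℝ] X) (S : ℝ → ℝ → X →L[ℝ] X) (a b D : ℝ)
    (hdich : IsDichotomy T N P S a b D)
    (q : ℝ≥0∞) (hq : 1 ≤ q)
    (y : ℝ → X) (hy : MemY2 N q y)
    (hmeas : ∀ t, AEStronglyMeasurable (fun τ => T t τ (P τ (y τ))) volume) :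
    ∀ t : ℝ, IntegrableOn (fun τ => T t τ (P τ (y τ))) (Iic t) volume ∧
      N t (∫ τ in Iic t, T t τ (P τ (y τ))) ≤
        D / (1 - Real.exp a) * (famLpNorm N q y).toReal :=
  stable_convolution_bound_general T N C ε hN₁ hN₂ hNadd hNsmul hNmeas P S a b D hdich q hq y hy
    hmeas
end

section
/- Assume that for each y ∈ L^q there exists a unique x ∈ L^p ∩ C_b satisfying the integral equation x(t) = T(t,τ)x(τ) + ∫_τ^t T(t,s)y(s) ds for t ≥ τ. For τ ∈ ℝ define F^s_τ = {x ∈ X : sup_{t≥τ}‖T(t,τ)x‖_t < ∞ and the function equal to T(t,τ)x for t≥τ and 0 for t<τ lies in L^p}, and F^u_τ = {x ∈ X : ∃φ_x:(−∞,τ]→X with φ_x(τ)=x, φ_x(t)=T(t,s)φ_x(s) for s≤t≤τ, sup_{t≤τ}‖φ_x(t)‖_t < ∞, and the extension by 0 lies in L^p}. Then X = F^s_τ ⊕ F^u_τ. -/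
open MeasureTheory Set Filter
open scoped ENNReal

/-- The stable set `F^s_τ`: points with forward trajectory bounded in the norms `‖·‖_t`
whose zero-extension lies in `L^p`. -/
def Fs {X : Type*} [NormedAddCommGroup X] [NormedSpace ℝ X]
    (T : ℝ → ℝ → X →L[ℝ] X) (N : ℝ → X → ℝ) (p : ℝ≥0∞) (τ : ℝ) : Set X :=
  {x | (∃ M, ∀ t, τ ≤ t → N t (T t τ x) ≤ M) ∧
    famLpNorm N p (fun t => if τ ≤ t then T t τ x else 0) < ∞}

/-- The unstable set `F^u_τ`: points admitting a backward trajectory bounded in the norms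
`‖·‖_t` whose zero-extension lies in `L^p`. -/
def Fu {X : Type*} [NormedAddCommGroup X] [NormedSpace ℝ X]
    (T : ℝ → ℝ → X →L[ℝ] X) (N : ℝ → X → ℝ) (p : ℝ≥0∞) (τ : ℝ) : Set X :=
  {x | ∃ φ : ℝ → X, φ τ = x ∧ (∀ s t, s ≤ t → t ≤ τ → φ t = T t s (φ s)) ∧
    (∃ M, ∀ t, t ≤ τ → N t (φ t) ≤ M) ∧
    famLpNorm N p (fun t => if t ≤ τ then φ t else 0) < ∞}

/-!
For `u ∈ X`, feed the admissible equation the input `pulse T τ u = T(·,τ)u · χ_{(τ,τ+1]}`. Its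
solution `x` is a backward orbit on `(-∞, τ]` and equals `T(t,τ)(x τ + u)` for `t ≥ τ + 1`, so
`u = (x τ + u) + (-x τ)` with `x τ + u ∈ F^s_τ` and `-x τ ∈ F^u_τ`. Conversely, a vector of
`F^s_τ ∩ F^u_τ` together with its bounded backward orbit is a bounded `L^p` solution of the
homogeneous equation, hence zero by uniqueness.
-/

section FamilyLpNorm

variable {X : Type*} [NormedAddCommGroup X] {N : ℝ → X → ℝ} {p q : ℝ≥0∞} {f g h : ℝ → X}

-- The junk value `(∫⁻ t, 1) ^ (1 / 0) = ∞ ^ 0`.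
theorem famLpNorm_exponent_zero (N : ℝ → X → ℝ) (f : ℝ → X) : famLpNorm N 0 f = 1 := by
  simp [famLpNorm]

theorem famLpNorm_lt_top_iff_lintegral_lt_top (hp0 : p ≠ 0) (hp : p ≠ ∞) :
    famLpNorm N p f < ∞ ↔ ∫⁻ t, ENNReal.ofReal (N t (f t)) ^ p.toReal < ∞ := by
  have : 0 < 1 / p.toReal := one_div_pos.mpr (ENNReal.toReal_pos hp0 hp)
  rw [famLpNorm, if_neg hp, ENNReal.rpow_lt_top_iff_of_pos this]

theorem famLpNorm_mono (hfg : ∀ t, N t (f t) ≤ N t (g t)) :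
    famLpNorm N p f ≤ famLpNorm N p g := by
  unfold famLpNorm
  split_ifs
  · exact essSup_mono_ae (.of_forall fun t => ENNReal.ofReal_le_ofReal (hfg t))
  · exact ENNReal.rpow_le_rpow (lintegral_mono fun t =>
      ENNReal.rpow_le_rpow (ENNReal.ofReal_le_ofReal (hfg t)) ENNReal.toReal_nonneg)
      (by positivity)

theorem famLpNorm_lt_top_of_bounded_support {a b B : ℝ}
    (hB : ∀ t ∈ Icc a b, N t (f t) ≤ B) (h0 : ∀ t ∉ Icc a b, N t (f t) = 0) :
    famLpNorm N p f < ∞ := by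
  have hle : ∀ t,
      ENNReal.ofReal (N t (f t)) ≤ (Icc a b).indicator (fun _ => ENNReal.ofReal B) t := by
    intro t
    by_cases ht : t ∈ Icc a b
    · simpa [ht] using ENNReal.ofReal_le_ofReal (hB t ht)
    · simp [ht, h0 t ht]
  by_cases hp0 : p = 0
  · simp [hp0, famLpNorm_exponent_zero]
  by_cases hp : p = ∞
  · rw [famLpNorm, if_pos hp]
    refine (essSup_le_of_ae_le (ENNReal.ofReal B) (.of_forall fun t => (hle t).trans ?_)).trans_lt
      ENNReal.ofReal_lt_top
    exact indicator_le_self' (fun _ _ => zero_le) t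
  have hr : 0 < p.toReal := ENNReal.toReal_pos hp0 hp
  rw [famLpNorm_lt_top_iff_lintegral_lt_top hp0 hp]
  calc ∫⁻ t, ENNReal.ofReal (N t (f t)) ^ p.toReal
      ≤ ∫⁻ t, (Icc a b).indicator (fun _ => ENNReal.ofReal B ^ p.toReal) t := by
        refine lintegral_mono fun t => (ENNReal.rpow_le_rpow (hle t) hr.le).trans_eq ?_
        by_cases ht : t ∈ Icc a b <;> simp [ht, ENNReal.zero_rpow_of_pos hr]
    _ = ENNReal.ofReal B ^ p.toReal * volume (Icc a b) := by
        rw [lintegral_indicator measurableSet_Icc, setLIntegral_const]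
    _ < ∞ := ENNReal.mul_lt_top
        (ENNReal.rpow_lt_top_of_nonneg hr.le ENNReal.ofReal_ne_top) (by simp [Real.volume_Icc])

theorem famLpNorm_lt_top_of_piecewise_le {S : Set ℝ} (hS : MeasurableSet S)
    (hfg : ∀ t ∈ S, N t (f t) ≤ N t (g t)) (hfh : ∀ t ∉ S, N t (f t) ≤ N t (h t))
    (hg : famLpNorm N p g < ∞) (hh : famLpNorm N p h < ∞) :
    famLpNorm N p f < ∞ := by
  by_cases hp0 : p = 0
  · simp [hp0, famLpNorm_exponent_zero]
  by_cases hp : p = ∞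
  · rw [famLpNorm, if_pos hp] at hg hh ⊢
    refine (essSup_le_of_ae_le _ ?_).trans_lt (max_lt hg hh)
    filter_upwards [ENNReal.ae_le_essSup fun t => ENNReal.ofReal (N t (g t)),
      ENNReal.ae_le_essSup fun t => ENNReal.ofReal (N t (h t))] with t hgt hht
    by_cases ht : t ∈ S
    · exact le_max_of_le_left ((ENNReal.ofReal_le_ofReal (hfg t ht)).trans hgt)
    · exact le_max_of_le_right ((ENNReal.ofReal_le_ofReal (hfh t ht)).trans hht)
  have hr : 0 < p.toReal := ENNReal.toReal_pos hp0 hp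
  rw [famLpNorm_lt_top_iff_lintegral_lt_top hp0 hp] at hg hh ⊢
  have hpow {u v : ℝ → X} {A : Set ℝ} (hA : MeasurableSet A)
      (huv : ∀ t ∈ A, N t (u t) ≤ N t (v t)) :
      ∫⁻ t in A, ENNReal.ofReal (N t (u t)) ^ p.toReal ≤
        ∫⁻ t, ENNReal.ofReal (N t (v t)) ^ p.toReal :=
    (setLIntegral_mono_ae' hA (.of_forall fun t ht =>
      ENNReal.rpow_le_rpow (ENNReal.ofReal_le_ofReal (huv t ht)) hr.le)).trans
      (setLIntegral_le_lintegral _ _)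
  rw [← lintegral_add_compl _ hS]
  exact (add_le_add (hpow hS hfg) (hpow hS.compl hfh)).trans_lt (ENNReal.add_lt_top.mpr ⟨hg, hh⟩)

theorem famLpNorm_lt_top_of_forall_eq_zero (hf : ∀ t, N t (f t) = 0) : famLpNorm N p f < ∞ :=
  famLpNorm_lt_top_of_bounded_support (a := 0) (b := 0) (fun t _ => (hf t).le) fun t _ => hf t

theorem memY1_zero (hN_zero : ∀ t, N t 0 = 0) : MemY1 N p (0 : ℝ → X) :=
  ⟨continuous_const, ⟨0, fun t => (hN_zero t).le⟩, famLpNorm_lt_top_of_forall_eq_zero hN_zero⟩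

theorem memY2_zero (hN_zero : ∀ t, N t 0 = 0) : MemY2 N q (0 : ℝ → X) :=
  ⟨aestronglyMeasurable_const, famLpNorm_lt_top_of_forall_eq_zero hN_zero⟩

end FamilyLpNorm

section Evolution

variable {X : Type*} [NormedAddCommGroup X] [NormedSpace ℝ X] {T : ℝ → ℝ → X →L[ℝ] X}
  {N : ℝ → X → ℝ} {p q : ℝ≥0∞} {x y φ : ℝ → X} {τ : ℝ} {u : X}

theorem solvesEq_zero_iff : SolvesEq T x 0 ↔ ∀ s t, s ≤ t → x t = T t s (x s) := by
  simp [SolvesEq]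

theorem SolvesEq.apply_eq_of_eqOn_zero (hx : SolvesEq T x y) {s t : ℝ} (hst : s ≤ t)
    (hy : EqOn y 0 (Ioc s t)) : x t = T t s (x s) := by
  rw [hx s t hst, setIntegral_eq_zero_of_forall_eq_zero fun σ hσ => by simp [hy hσ], add_zero]

theorem continuous_of_solvesEq_zero (hCont : ∀ τ (u : X), ContinuousOn (fun t => T t τ u) (Ici τ))
    (hx : SolvesEq T x 0) : Continuous x := by
  refine continuous_iff_continuousAt.mpr fun t₀ => ?_
  have : ContinuousOn x (Ici (t₀ - 1)) :=
    (hCont _ (x (t₀ - 1))).congr fun t ht => solvesEq_zero_iff.mp hx _ t ht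
  exact this.continuousAt (Ici_mem_nhds (by linarith))

theorem zero_mem_Fs (hN_zero : ∀ t, N t 0 = 0) : (0 : X) ∈ Fs T N p τ :=
  ⟨⟨0, fun t _ => by simp [hN_zero]⟩, famLpNorm_lt_top_of_forall_eq_zero fun t => by simp [hN_zero]⟩

theorem zero_mem_Fu (hN_zero : ∀ t, N t 0 = 0) : (0 : X) ∈ Fu T N p τ :=
  ⟨0, rfl, fun s t _ _ => by simp, ⟨0, fun t _ => (hN_zero t).le⟩,
    famLpNorm_lt_top_of_forall_eq_zero fun t => by simp [hN_zero]⟩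

theorem evolution_le_of_mem_Icc {K c t : ℝ} (hN_nonneg : ∀ t (u : X), 0 ≤ N t u)
    (hBd : ∀ τ t (u : X), τ ≤ t → N t (T t τ u) ≤ K * Real.exp (c * (t - τ)) * N τ u)
    (u : X) (ht : t ∈ Icc τ (τ + 1)) :
    N t (T t τ u) ≤ |K| * Real.exp |c| * N τ u := by
  refine (hBd τ t u ht.1).trans ?_
  have hexp : c * (t - τ) ≤ |c| :=
    (mul_le_mul_of_nonneg_right (le_abs_self c) (sub_nonneg.2 ht.1)).trans
      (mul_le_of_le_one_right (abs_nonneg c) (by linarith [ht.2]))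
  have := hN_nonneg τ u
  gcongr
  exact le_abs_self K

noncomputable def pulse (T : ℝ → ℝ → X →L[ℝ] X) (τ : ℝ) (u : X) : ℝ → X :=
  (Ioc τ (τ + 1)).indicator fun s => T s τ u

theorem memY2_pulse {K c : ℝ} (hN_nonneg : ∀ t (u : X), 0 ≤ N t u) (hN_zero : ∀ t, N t 0 = 0)
    (hCont : ∀ τ (u : X), ContinuousOn (fun t => T t τ u) (Ici τ))
    (hBd : ∀ τ t (u : X), τ ≤ t → N t (T t τ u) ≤ K * Real.exp (c * (t - τ)) * N τ u)
    (τ : ℝ) (u : X) : MemY2 N q (pulse T τ u) := by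
  refine ⟨(aestronglyMeasurable_indicator_iff measurableSet_Ioc).mpr
    (((hCont τ u).mono (Ioc_subset_Icc_self.trans Icc_subset_Ici_self)).aestronglyMeasurable
      measurableSet_Ioc), famLpNorm_lt_top_of_bounded_support
      (a := τ) (b := τ + 1) (B := |K| * Real.exp |c| * N τ u) (fun t ht => ?_) fun t ht => ?_⟩
  · by_cases ht' : t ∈ Ioc τ (τ + 1)
    · rw [pulse, indicator_of_mem ht']
      exact evolution_le_of_mem_Icc hN_nonneg hBd u ht
    · rw [pulse, indicator_of_notMem ht', hN_zero]
      exact mul_nonneg (by positivity) (hN_nonneg τ u)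
  · rw [pulse, indicator_of_notMem fun h => ht (Ioc_subset_Icc_self h), hN_zero]

theorem setIntegral_pulse [CompleteSpace X]
    (hCoc : ∀ τ s t, τ ≤ s → s ≤ t → ∀ u, T t s (T s τ u) = T t τ u) {t : ℝ} (ht : τ + 1 ≤ t) :
    ∫ s in Ioc τ t, T t s (pulse T τ u s) = T t τ u := by
  have : (fun s => T t s (pulse T τ u s)) = (Ioc τ (τ + 1)).indicator fun s => T t s (T s τ u) := by
    ext s
    by_cases hs : s ∈ Ioc τ (τ + 1) <;> simp [pulse, hs]
  rw [this, setIntegral_indicator measurableSet_Ioc,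
    inter_eq_self_of_subset_right (Ioc_subset_Ioc_right ht),
    setIntegral_congr_fun measurableSet_Ioc fun s hs => hCoc τ s t hs.1.le (hs.2.trans ht) u,
    setIntegral_const, Real.volume_real_Ioc]
  simp

theorem SolvesEq.apply_eq_of_pulse_of_le (hx : SolvesEq T x (pulse T τ u)) {s t : ℝ} (hst : s ≤ t)
    (ht : t ≤ τ) : x t = T t s (x s) :=
  hx.apply_eq_of_eqOn_zero hst fun _ hσ =>
    indicator_of_notMem (fun h => lt_irrefl τ (h.1.trans_le (hσ.2.trans ht))) _

theorem SolvesEq.apply_eq_of_pulse_of_ge [CompleteSpace X]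
    (hCoc : ∀ τ s t, τ ≤ s → s ≤ t → ∀ u, T t s (T s τ u) = T t τ u)
    (hx : SolvesEq T x (pulse T τ u)) {t : ℝ} (ht : τ + 1 ≤ t) : x t = T t τ (x τ + u) := by
  rw [hx τ t (by linarith), setIntegral_pulse hCoc ht, map_add]

theorem add_mem_Fs_of_solvesEq_pulse [CompleteSpace X] {K c : ℝ}
    (hN_nonneg : ∀ t (u : X), 0 ≤ N t u) (hN_zero : ∀ t, N t 0 = 0)
    (hCoc : ∀ τ s t, τ ≤ s → s ≤ t → ∀ u, T t s (T s τ u) = T t τ u)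
    (hBd : ∀ τ t (u : X), τ ≤ t → N t (T t τ u) ≤ K * Real.exp (c * (t - τ)) * N τ u)
    (hx : MemY1 N p x) (hxeq : SolvesEq T x (pulse T τ u)) : x τ + u ∈ Fs T N p τ := by
  obtain ⟨-, ⟨M, hM⟩, hxp⟩ := hx
  have hbd := fun t (ht : t ∈ Icc τ (τ + 1)) => evolution_le_of_mem_Icc hN_nonneg hBd (x τ + u) ht
  refine ⟨⟨max (|K| * Real.exp |c| * N τ (x τ + u)) M, fun t ht => ?_⟩, ?_⟩
  · rcases le_or_gt t (τ + 1) with h | h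
    · exact le_max_of_le_left (hbd t ⟨ht, h⟩)
    · rw [← hxeq.apply_eq_of_pulse_of_ge hCoc h.le]
      exact le_max_of_le_right (hM t)
  refine famLpNorm_lt_top_of_piecewise_le (S := Iic (τ + 1)) measurableSet_Iic
    (g := (Icc τ (τ + 1)).indicator fun t => T t τ (x τ + u)) (fun t ht => le_of_eq ?_)
    (fun t ht => le_of_eq ?_) ?_ hxp
  · by_cases h : τ ≤ t <;> simp [h, mem_Iic.mp ht]
  · have h : τ + 1 < t := not_le.mp ht
    rw [if_pos (by linarith), hxeq.apply_eq_of_pulse_of_ge hCoc h.le]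
  · exact famLpNorm_lt_top_of_bounded_support
      (fun t ht => by rw [indicator_of_mem ht]; exact hbd t ht) fun t ht => by simp [ht, hN_zero]

theorem neg_mem_Fu_of_solvesEq_pulse (hN_nonneg : ∀ t (u : X), 0 ≤ N t u) (hN_zero : ∀ t, N t 0 = 0)
    (hN_neg : ∀ t (u : X), N t (-u) = N t u) (hx : MemY1 N p x)
    (hxeq : SolvesEq T x (pulse T τ u)) : -x τ ∈ Fu T N p τ := by
  obtain ⟨-, ⟨M, hM⟩, hxp⟩ := hx
  refine ⟨-x, rfl, fun s t hst ht => ?_, ⟨M, fun t _ => ?_⟩,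
    (famLpNorm_mono fun t => ?_).trans_lt hxp⟩
  · simp [hxeq.apply_eq_of_pulse_of_le hst ht]
  · simpa [hN_neg] using hM t
  · by_cases h : t ≤ τ <;> simp [h, hN_neg, hN_zero, hN_nonneg]

noncomputable def forwardExtend (T : ℝ → ℝ → X →L[ℝ] X) (τ : ℝ) (φ : ℝ → X) : ℝ → X :=
  fun t => if τ < t then T t τ (φ τ) else φ t

theorem solvesEq_forwardExtend (hCoc : ∀ τ s t, τ ≤ s → s ≤ t → ∀ u, T t s (T s τ u) = T t τ u)
    (hφ : ∀ s t, s ≤ t → t ≤ τ → φ t = T t s (φ s)) : SolvesEq T (forwardExtend T τ φ) 0 := by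
  refine solvesEq_zero_iff.mpr fun s t hst => ?_
  simp only [forwardExtend]
  split_ifs with ht hs hs
  · rw [hCoc τ s t hs.le hst]
  · rw [hφ s τ (not_lt.mp hs) le_rfl, hCoc s τ t (not_lt.mp hs) ht.le]
  · exact absurd (hs.trans_le hst) ht
  · exact hφ s t hst (not_lt.mp ht)

theorem memY1_forwardExtend (hCont : ∀ τ (u : X), ContinuousOn (fun t => T t τ u) (Ici τ))
    (hCoc : ∀ τ s t, τ ≤ s → s ≤ t → ∀ u, T t s (T s τ u) = T t τ u)
    (hs : φ τ ∈ Fs T N p τ) (hφ : ∀ s t, s ≤ t → t ≤ τ → φ t = T t s (φ s))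
    (hφM : ∃ M, ∀ t, t ≤ τ → N t (φ t) ≤ M)
    (hφp : famLpNorm N p (fun t => if t ≤ τ then φ t else 0) < ∞) :
    MemY1 N p (forwardExtend T τ φ) := by
  obtain ⟨⟨Ms, hMs⟩, hsp⟩ := hs
  obtain ⟨Mu, hMu⟩ := hφM
  refine ⟨continuous_of_solvesEq_zero hCont (solvesEq_forwardExtend hCoc hφ),
    ⟨max Ms Mu, fun t => ?_⟩, famLpNorm_lt_top_of_piecewise_le (S := Ioi τ) measurableSet_Ioi
      (fun t ht => le_of_eq ?_) (fun t ht => le_of_eq ?_) hsp hφp⟩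
  · by_cases h : τ < t
    · simpa [forwardExtend, h] using le_max_of_le_left (hMs t h.le)
    · simpa [forwardExtend, h] using le_max_of_le_right (hMu t (not_lt.mp h))
  · simp [forwardExtend, mem_Ioi.mp ht, (mem_Ioi.mp ht).le]
  · simp [forwardExtend, notMem_Ioi.mp ht, not_lt.mpr (notMem_Ioi.mp ht)]

theorem eq_zero_of_mem_Fs_of_mem_Fu {v : X}
    (hCont : ∀ τ (u : X), ContinuousOn (fun t => T t τ u) (Ici τ))
    (hCoc : ∀ τ s t, τ ≤ s → s ≤ t → ∀ u, T t s (T s τ u) = T t τ u)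
    (hUniq : ∀ z, MemY1 N p z → SolvesEq T z 0 → z = 0)
    (hs : v ∈ Fs T N p τ) (hu : v ∈ Fu T N p τ) : v = 0 := by
  obtain ⟨φ, rfl, hφ, hφM, hφp⟩ := hu
  have := hUniq _ (memY1_forwardExtend hCont hCoc hs hφ hφM hφp) (solvesEq_forwardExtend hCoc hφ)
  simpa [forwardExtend] using congr_fun this τ

end Evolution

theorem admissibility_implies_splitting_general
    {X : Type*} [NormedAddCommGroup X] [NormedSpace ℝ X] [CompleteSpace X]
    (T : ℝ → ℝ → X →L[ℝ] X) (N : ℝ → X → ℝ) (K c : ℝ)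
    (hN₁ : ∀ t u, ‖u‖ ≤ N t u)
    (hNsmul : ∀ t (r : ℝ) (u : X), N t (r • u) = |r| * N t u)
    (hCoc : ∀ τ s t, τ ≤ s → s ≤ t → ∀ u, T t s (T s τ u) = T t τ u)
    (hCont : ∀ τ (u : X), ContinuousOn (fun t => T t τ u) (Ici τ))
    (hBd : ∀ τ t (u : X), τ ≤ t → N t (T t τ u) ≤ K * Real.exp (c * (t - τ)) * N τ u)
    (p q : ℝ≥0∞)
    (hAdm : ∀ y : ℝ → X, MemY2 N q y →
      ∃! x : ℝ → X, MemY1 N p x ∧ SolvesEq T x y) :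
    ∀ τ : ℝ, (∀ u : X, ∃ v ∈ Fs T N p τ, ∃ w ∈ Fu T N p τ, u = v + w) ∧
      Fs T N p τ ∩ Fu T N p τ = {0} := by
  intro τ
  have hN_nonneg : ∀ t (u : X), 0 ≤ N t u := fun t u => (norm_nonneg u).trans (hN₁ t u)
  have hN_zero : ∀ t, N t (0 : X) = 0 := fun t => by simpa using hNsmul t 0 0
  have hN_neg : ∀ t (u : X), N t (-u) = N t u := fun t u => by simpa using hNsmul t (-1) u
  have hUniq : ∀ z, MemY1 N p z → SolvesEq T z 0 → z = 0 := by
    obtain ⟨_, -, huniq⟩ := hAdm 0 (memY2_zero hN_zero)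
    exact fun z hz hzeq => (huniq z ⟨hz, hzeq⟩).trans
      (huniq 0 ⟨memY1_zero hN_zero, solvesEq_zero_iff.mpr fun s t _ => by simp⟩).symm
  refine ⟨fun u => ?_, subset_antisymm (fun v hv => ?_) ?_⟩
  · obtain ⟨x, ⟨hx, hxeq⟩, -⟩ := hAdm _ (memY2_pulse hN_nonneg hN_zero hCont hBd τ u)
    exact ⟨x τ + u, add_mem_Fs_of_solvesEq_pulse hN_nonneg hN_zero hCoc hBd hx hxeq,
      -x τ, neg_mem_Fu_of_solvesEq_pulse hN_nonneg hN_zero hN_neg hx hxeq, by abel⟩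
  · exact eq_zero_of_mem_Fs_of_mem_Fu hCont hCoc hUniq hv.1 hv.2
  · rintro _ rfl
    exact ⟨zero_mem_Fs hN_zero, zero_mem_Fu hN_zero⟩

/-- **Lemma 3.** If for each `y ∈ L^q` there is a unique `x ∈ L^p ∩ C_b`
satisfying the integral equation, then `X = F^s_τ ⊕ F^u_τ` for every `τ`. -/
theorem admissibility_implies_splitting
    {X : Type*} [NormedAddCommGroup X] [NormedSpace ℝ X] [CompleteSpace X]
    (T : ℝ → ℝ → X →L[ℝ] X) (N : ℝ → X → ℝ) (C ε K c : ℝ)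
    (hN₁ : ∀ t u, ‖u‖ ≤ N t u)
    (hN₂ : ∀ t (u : X), N t u ≤ C * Real.exp (ε * |t|) * ‖u‖)
    (hNadd : ∀ t (u v : X), N t (u + v) ≤ N t u + N t v)
    (hNsmul : ∀ t (r : ℝ) (u : X), N t (r • u) = |r| * N t u)
    (hNmeas : ∀ u : X, Measurable fun t => N t u)
    (hId : ∀ t, T t t = ContinuousLinearMap.id ℝ X)
    (hCoc : ∀ τ s t, τ ≤ s → s ≤ t → ∀ u, T t s (T s τ u) = T t τ u)
    (hCont : ∀ τ (u : X), ContinuousOn (fun t => T t τ u) (Ici τ))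
    (hContB : ∀ τ (u : X), ContinuousOn (fun s => T τ s u) (Iic τ))
    (hBd : ∀ τ t (u : X), τ ≤ t → N t (T t τ u) ≤ K * Real.exp (c * (t - τ)) * N τ u)
    (hK : 0 < K)
    (p q : ℝ≥0∞) (hq : 1 ≤ q) (hpq : q ≤ p)
    (hAdm : ∀ y : ℝ → X, MemY2 N q y →
      ∃! x : ℝ → X, MemY1 N p x ∧ SolvesEq T x y) :
    ∀ τ : ℝ, (∀ u : X, ∃ v ∈ Fs T N p τ, ∃ w ∈ Fu T N p τ, u = v + w) ∧
      Fs T N p τ ∩ Fu T N p τ = {0} :=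
  admissibility_implies_splitting_general T N K c hN₁ hNsmul hCoc hCont hBd p q hAdm
end
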